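/- arXiv:2507.03424 — 9 statements merged into one kernel-verified Lean document; each statement's English description precedes it below -/
import Mathlib

section
/- Let S be a nonempty subset of ℝⁿ, let f : ℝⁿ → ℝ ∪ {∞} be an extended real-valued function with f_* := inf_{x ∈ S} f(x) finite, and let ψ : ℝⁿ → ℝ be a residual function of S. If there exists a constant c_* > 0 such that c_*·ψ(x) ≥ [f_* − f(x)]_+ for all x ∈ ℝⁿ, then for every c > c_* one has inf_{x ∈ S} f(x) = inf_{x ∈ ℝⁿ} ( f(x) + c·ψ(x) ). -/
/-- Theorem 3.1, implication (iii) ⇒ (i): if there is `c_* > 0` with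
`c_* ψ(x) ≥ [f_* - f(x)]₊` for all `x`, then for every `c > c_*` the penalty
function is exact in value:
`inf_{x ∈ S} f(x) = inf_{x ∈ ℝⁿ} (f(x) + c ψ(x))`. -/
theorem stmt_0 {n : ℕ} (S : Set (EuclideanSpace ℝ (Fin n))) (hS : S.Nonempty)
    (f : EuclideanSpace ℝ (Fin n) → EReal) (hf : ∀ x, f x ≠ ⊥)
    (fstar : ℝ) (hfstar : (fstar : EReal) = ⨅ x ∈ S, f x)
    (ψ : EuclideanSpace ℝ (Fin n) → ℝ)
    (hψ0 : ∀ x, 0 ≤ ψ x) (hψS : ∀ x, ψ x = 0 ↔ x ∈ S)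
    (cstar : ℝ) (hcstar : 0 < cstar)
    (hpen : ∀ x, max ((fstar : EReal) - f x) 0 ≤ ((cstar * ψ x : ℝ) : EReal)) :
    ∀ c : ℝ, cstar < c →
      (⨅ x ∈ S, f x) = ⨅ x, f x + ((c * ψ x : ℝ) : EReal) := by
  intro c hc
  apply le_antisymm
  · -- fstar ≤ each f x + c ψ x
    rw [← hfstar]
    apply le_iInf
    intro x
    have hle : ((cstar * ψ x : ℝ) : EReal) ≤ ((c * ψ x : ℝ) : EReal) := by
      exact_mod_cast mul_le_mul_of_nonneg_right hc.le (hψ0 x)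
    have hp := hpen x
    rcases eq_or_ne (f x) ⊤ with ht | ht
    · rw [ht, EReal.top_add_of_ne_bot (EReal.coe_ne_bot _)]
      exact le_top
    · lift f x to ℝ using ⟨ht, hf x⟩ with r hr
      have h1 : (fstar : EReal) - (r : EReal) ≤ ((c * ψ x : ℝ) : EReal) :=
        le_trans (le_trans (le_max_left _ _) hp) hle
      rw [← EReal.coe_sub] at h1
      rw [← EReal.coe_add]
      exact_mod_cast sub_le_iff_le_add'.mp (by exact_mod_cast h1)
  · -- inf over all ≤ inf over S
    apply le_iInf₂
    intro x hx
    have : ψ x = 0 := (hψS x).mpr hx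
    have := iInf_le (fun x => f x + ((c * ψ x : ℝ) : EReal)) x
    simpa [this, ‹ψ x = 0›] using this
end

section
/- Let S be a nonempty subset of ℝⁿ, let f : ℝⁿ → ℝ ∪ {∞} be an extended real-valued function with f_* := inf_{x ∈ S} f(x) finite, and let ψ : ℝⁿ → ℝ be a residual function of S. Assume there exists a constant c_* > 0 such that c_*·ψ(x) ≥ [f_* − f(x)]_+ for all x ∈ ℝⁿ. Then for every c > c_*, the set of minimizers of f over S coincides with the set of minimizers of f + c·ψ over ℝⁿ; that is, { x ∈ S : f(x) = f_* } = { x ∈ ℝⁿ : f(x) + c·ψ(x) = inf_{x' ∈ ℝⁿ} ( f(x') + c·ψ(x') ) }. -/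
/-!
On `S` the penalty vanishes, so `f + c ψ` agrees with `f` there and its infimum over the whole
space is at most `f_*`. Off `S` we have `ψ > 0`, and the hypothesis `f_* - f ≤ c_* ψ` together
with `c > c_*` gives `f_* < f + c ψ`; everywhere it gives `f_* ≤ f + c ψ`. Hence the infimum is
exactly `f_*`, it is attained only on `S`, and there exactly where `f = f_*`.
-/

namespace EReal

theorem coe_le_add_mul_of_sub_le {a cstar c p : ℝ} {y : EReal} (hp : 0 ≤ p) (hc : cstar ≤ c)
    (h : (a : EReal) - y ≤ ((cstar * p : ℝ) : EReal)) : (a : EReal) ≤ y + ((c * p : ℝ) : EReal) := by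
  rw [add_comm, ← sub_le_iff_le_add (.inr (coe_ne_top _)) (.inr (coe_ne_bot _))]
  exact h.trans (EReal.coe_le_coe (mul_le_mul_of_nonneg_right hc hp))

theorem coe_lt_add_mul_of_sub_le {a cstar c p : ℝ} {y : EReal} (hp : 0 < p) (hc : cstar < c)
    (h : (a : EReal) - y ≤ ((cstar * p : ℝ) : EReal)) : (a : EReal) < y + ((c * p : ℝ) : EReal) := by
  rw [add_comm, ← sub_lt_iff (.inr (coe_ne_bot _)) (.inr (coe_ne_top _))]
  exact h.trans_lt (EReal.coe_lt_coe (mul_lt_mul_of_pos_right hc hp))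

end EReal

section ExactPenalty

variable {α : Type*} {S : Set α} {f : α → EReal} {ψ : α → ℝ} {fstar cstar c : ℝ}

theorem iInf_add_penalty_eq (hfstar : (fstar : EReal) = ⨅ x ∈ S, f x)
    (hψS : ∀ x ∈ S, ψ x = 0) (hle : ∀ x, (fstar : EReal) ≤ f x + ((c * ψ x : ℝ) : EReal)) :
    ⨅ x, f x + ((c * ψ x : ℝ) : EReal) = fstar := by
  refine le_antisymm ?_ (le_iInf hle)
  rw [hfstar]
  refine le_iInf₂ fun x hx => (iInf_le _ x).trans_eq ?_
  rw [hψS x hx, mul_zero, EReal.coe_zero, add_zero]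

theorem minimizers_eq_minimizers_add_penalty (hfstar : (fstar : EReal) = ⨅ x ∈ S, f x)
    (hψ0 : ∀ x, 0 ≤ ψ x) (hψS : ∀ x, ψ x = 0 ↔ x ∈ S)
    (hpen : ∀ x, (fstar : EReal) - f x ≤ ((cstar * ψ x : ℝ) : EReal)) (hc : cstar < c) :
    {x | x ∈ S ∧ f x = (fstar : EReal)} =
      {x | f x + ((c * ψ x : ℝ) : EReal) = ⨅ x', f x' + ((c * ψ x' : ℝ) : EReal)} := by
  have hinf : ⨅ x, f x + ((c * ψ x : ℝ) : EReal) = fstar :=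
    iInf_add_penalty_eq hfstar (fun x => (hψS x).2)
      fun x => EReal.coe_le_add_mul_of_sub_le (hψ0 x) hc.le (hpen x)
  ext x
  simp only [Set.mem_ofPred_eq, hinf]
  constructor
  · rintro ⟨hxS, hfx⟩
    rw [(hψS x).2 hxS, mul_zero, EReal.coe_zero, add_zero, hfx]
  · intro hx
    have hψx : ψ x = 0 := by
      by_contra hne
      exact (EReal.coe_lt_add_mul_of_sub_le ((hψ0 x).lt_of_ne' hne) hc (hpen x)).ne' hx
    rw [hψx, mul_zero, EReal.coe_zero, add_zero] at hx
    exact ⟨(hψS x).1 hψx, hx⟩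

end ExactPenalty

theorem stmt_2_general {n : ℕ} (S : Set (EuclideanSpace ℝ (Fin n)))
    (f : EuclideanSpace ℝ (Fin n) → EReal)
    (fstar : ℝ) (hfstar : (fstar : EReal) = ⨅ x ∈ S, f x)
    (ψ : EuclideanSpace ℝ (Fin n) → ℝ)
    (hψ0 : ∀ x, 0 ≤ ψ x) (hψS : ∀ x, ψ x = 0 ↔ x ∈ S)
    (cstar : ℝ)
    (hpen : ∀ x, max ((fstar : EReal) - f x) 0 ≤ ((cstar * ψ x : ℝ) : EReal)) :
    ∀ c : ℝ, cstar < c →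
      {x | x ∈ S ∧ f x = (fstar : EReal)} =
        {x | f x + ((c * ψ x : ℝ) : EReal) =
              ⨅ x', f x' + ((c * ψ x' : ℝ) : EReal)} := fun _ hc =>
  minimizers_eq_minimizers_add_penalty hfstar hψ0 hψS
    (fun x => (le_max_left _ _).trans (hpen x)) hc

/-- Theorem 3.1, argmin conclusion: if there is `c_* > 0` with
`c_* ψ(x) ≥ [f_* - f(x)]₊` for all `x`, then for every `c > c_*` the
minimizers of `f` over `S` coincide with the minimizers of `f + c ψ` over `ℝⁿ`. -/
theorem stmt_2 {n : ℕ} (S : Set (EuclideanSpace ℝ (Fin n))) (hS : S.Nonempty)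
    (f : EuclideanSpace ℝ (Fin n) → EReal) (hf : ∀ x, f x ≠ ⊥)
    (fstar : ℝ) (hfstar : (fstar : EReal) = ⨅ x ∈ S, f x)
    (ψ : EuclideanSpace ℝ (Fin n) → ℝ)
    (hψ0 : ∀ x, 0 ≤ ψ x) (hψS : ∀ x, ψ x = 0 ↔ x ∈ S)
    (cstar : ℝ) (hcstar : 0 < cstar)
    (hpen : ∀ x, max ((fstar : EReal) - f x) 0 ≤ ((cstar * ψ x : ℝ) : EReal)) :
    ∀ c : ℝ, cstar < c →
      {x | x ∈ S ∧ f x = (fstar : EReal)} =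
        {x | f x + ((c * ψ x : ℝ) : EReal) =
              ⨅ x', f x' + ((c * ψ x' : ℝ) : EReal)} :=
  stmt_2_general S f fstar hfstar ψ hψ0 hψS cstar hpen
end

section
/- Let f : ℝⁿ → ℝ ∪ {∞}, let g : ℝⁿ → ℝᵐ be a mapping, and let C be a nonempty subset of ℝᵐ; assume f_* := inf{ f(x) : g(x) ∈ C } is finite. If there exists a constant c_* > 0 such that for every pair (x̄, ū) ∈ ℝⁿ × ℝᵐ with g(x̄) ∈ C + ū one has f_* ≤ f(x̄) + c_*·‖ū‖ (global calmness), then inf{ f(x) : g(x) ∈ C } = inf_{x ∈ ℝⁿ} ( f(x) + c_*·dist(g(x), C) ). -/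
open scoped Pointwise

/-- Theorem 3.2, implication (ii) ⇒ (i): global calmness with constant `c_*`
implies exactness of the distance penalty with the same constant. -/
theorem stmt_4 {n m : ℕ}
    (f : EuclideanSpace ℝ (Fin n) → EReal) (hf : ∀ x, f x ≠ ⊥)
    (g : EuclideanSpace ℝ (Fin n) → EuclideanSpace ℝ (Fin m))
    (C : Set (EuclideanSpace ℝ (Fin m))) (hC : C.Nonempty)
    (fstar : ℝ) (hfstar : (fstar : EReal) = ⨅ x ∈ {x | g x ∈ C}, f x)
    (cstar : ℝ) (hcstar : 0 < cstar)
    (hcalm : ∀ (xbar : EuclideanSpace ℝ (Fin n)) (ubar : EuclideanSpace ℝ (Fin m)),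
      g xbar ∈ C + ({ubar} : Set (EuclideanSpace ℝ (Fin m))) →
      (fstar : EReal) ≤ f xbar + ((cstar * ‖ubar‖ : ℝ) : EReal)) :
    (⨅ x ∈ {x | g x ∈ C}, f x) =
      ⨅ x, f x + ((cstar * Metric.infDist (g x) C : ℝ) : EReal) := by
  apply le_antisymm
  · -- constrained inf ≤ penalized inf
    rw [← hfstar]
    refine le_iInf fun x => ?_
    set d : ℝ := Metric.infDist (g x) C with hd
    rcases eq_or_ne (f x) ⊤ with htop | htop
    · rw [htop]
      rw [EReal.top_add_coe]
      exact le_top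
    · have hfx : ((f x).toReal : EReal) = f x := EReal.coe_toReal htop (hf x)
      set r : ℝ := (f x).toReal with hr
      rw [← hfx, ← EReal.coe_add, EReal.coe_le_coe_iff]
      -- real inequality: fstar ≤ r + cstar * d
      refine le_of_forall_pos_le_add fun ε hε => ?_
      have hdlt : d < d + ε / cstar := lt_add_of_pos_right _ (by positivity)
      obtain ⟨y, hyC, hy⟩ := (Metric.infDist_lt_iff hC).mp hdlt
      have hmem : g x ∈ C + ({g x - y} : Set (EuclideanSpace ℝ (Fin m))) := by
        refine ⟨y, hyC, g x - y, rfl, by simp⟩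
      have h := hcalm x (g x - y) hmem
      rw [← hfx, ← EReal.coe_add, EReal.coe_le_coe_iff] at h
      have hnorm : ‖g x - y‖ = dist (g x) y := (dist_eq_norm _ _).symm
      calc fstar ≤ r + cstar * ‖g x - y‖ := h
        _ ≤ r + cstar * (d + ε / cstar) := by
            have : ‖g x - y‖ ≤ d + ε / cstar := by rw [hnorm]; exact hy.le
            nlinarith
        _ = r + cstar * d + ε := by field_simp; ring
  · -- penalized inf ≤ constrained inf
    refine le_iInf₂ fun x hx => ?_
    have hzero : Metric.infDist (g x) C = 0 := Metric.infDist_zero_of_mem hx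
    calc (⨅ x, f x + ((cstar * Metric.infDist (g x) C : ℝ) : EReal))
        ≤ f x + ((cstar * Metric.infDist (g x) C : ℝ) : EReal) := iInf_le _ x
      _ = f x := by rw [hzero, mul_zero, EReal.coe_zero, add_zero]
end

section
/- Let f : ℝⁿ → ℝ ∪ {∞}, let g : ℝⁿ → ℝᵐ be a mapping, and let C be a nonempty closed subset of ℝᵐ; assume f_* := inf{ f(x) : g(x) ∈ C } is finite. If there exists a constant c_* > 0 such that for every pair (x̄, ū) ∈ ℝⁿ × ℝᵐ with g(x̄) ∈ C + ū one has f_* ≤ f(x̄) + c_*·‖ū‖, then for every c > c_* the set of minimizers of f over { x : g(x) ∈ C } coincides with the set of minimizers of x ↦ f(x) + c·dist(g(x), C) over ℝⁿ. -/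
/-!
Calmness, applied with `ū := g x - p` for a point `p ∈ C` nearest to `g x`, gives
`f_* ≤ f x + c_* · dist(g x, C)` for every `x`, so the penalized infimum is `f_*` for every
`c ≥ c_*`. If `x` attains it with `c > c_*`, then `f x + c · d = f_* ≤ f x + c_* · d` forces
`d = dist(g x, C) = 0`, i.e. `x` is feasible and `f x = f_*`.
-/

open scoped Pointwise
open Metric

section ExactPenalty

variable {α E : Type*} [NormedAddCommGroup E] {f : α → EReal} {g : α → E} {C : Set E}

theorem le_add_mul_infDist_of_calm [ProperSpace E] (hC : C.Nonempty) (hCcl : IsClosed C)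
    {m : EReal} {cstar : ℝ}
    (hcalm : ∀ x u, g x ∈ C + {u} → m ≤ f x + ((cstar * ‖u‖ : ℝ) : EReal))
    {c : ℝ} (hc : cstar ≤ c) (x : α) :
    m ≤ f x + ((c * infDist (g x) C : ℝ) : EReal) := by
  obtain ⟨p, hp, hdist⟩ := hCcl.exists_infDist_eq_dist hC (g x)
  have hmem : g x ∈ C + {g x - p} := Set.mem_add.mpr ⟨p, hp, g x - p, rfl, add_sub_cancel p (g x)⟩
  refine (hcalm x _ hmem).trans (add_le_add_right ?_ _)
  rw [EReal.coe_le_coe_iff, hdist, dist_eq_norm]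
  exact mul_le_mul_of_nonneg_right hc (norm_nonneg _)

theorem iInf_add_mul_infDist_le_iInf_feasible (c : ℝ) :
    ⨅ x, f x + ((c * infDist (g x) C : ℝ) : EReal) ≤ ⨅ x ∈ {x | g x ∈ C}, f x :=
  le_iInf₂ fun x hx => iInf_le_of_le x <| by simp [infDist_zero_of_mem (show g x ∈ C from hx)]

end ExactPenalty

theorem EReal.eq_zero_of_add_mul_eq_of_le_add_mul {a : EReal} {m s t d : ℝ} (hst : s < t)
    (hd : 0 ≤ d) (hle : (m : EReal) ≤ a + ((s * d : ℝ) : EReal))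
    (heq : a + ((t * d : ℝ) : EReal) = m) : d = 0 := by
  induction a using EReal.rec with
  | bot => simp at hle
  | top => exact absurd ((EReal.top_add_coe _).symm.trans heq) (EReal.top_ne_coe _)
  | coe r =>
    norm_cast at hle heq
    nlinarith

theorem stmt_5_general {n m : ℕ}
    (f : EuclideanSpace ℝ (Fin n) → EReal)
    (g : EuclideanSpace ℝ (Fin n) → EuclideanSpace ℝ (Fin m))
    (C : Set (EuclideanSpace ℝ (Fin m))) (hC : C.Nonempty) (hCcl : IsClosed C)
    (fstar : ℝ) (hfstar : (fstar : EReal) = ⨅ x ∈ {x | g x ∈ C}, f x)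
    (cstar : ℝ)
    (hcalm : ∀ (xbar : EuclideanSpace ℝ (Fin n)) (ubar : EuclideanSpace ℝ (Fin m)),
      g xbar ∈ C + ({ubar} : Set (EuclideanSpace ℝ (Fin m))) →
      (fstar : EReal) ≤ f xbar + ((cstar * ‖ubar‖ : ℝ) : EReal)) :
    ∀ c : ℝ, cstar < c →
      {x | g x ∈ C ∧ f x = (fstar : EReal)} =
        {x | f x + ((c * Metric.infDist (g x) C : ℝ) : EReal) =
              ⨅ x', f x' + ((c * Metric.infDist (g x') C : ℝ) : EReal)} := by
  intro c hc
  have hlower {c' : ℝ} (hc' : cstar ≤ c') :=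
    le_add_mul_infDist_of_calm hC hCcl hcalm hc'
  have hinf : ⨅ x, f x + ((c * infDist (g x) C : ℝ) : EReal) = fstar :=
    le_antisymm (hfstar ▸ iInf_add_mul_infDist_le_iInf_feasible c) (le_iInf (hlower hc.le))
  ext x
  simp only [Set.mem_ofPred_eq, hinf]
  constructor
  · rintro ⟨hx, hfx⟩
    simp [infDist_zero_of_mem hx, hfx]
  · intro hx
    have hd := EReal.eq_zero_of_add_mul_eq_of_le_add_mul hc infDist_nonneg (hlower le_rfl x) hx
    exact ⟨(hCcl.mem_iff_infDist_zero hC).2 hd, by simpa [hd] using hx⟩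

/-- Theorem 3.2, argmin conclusion: under global calmness with constant `c_*`,
for every `c > c_*` the minimizers of `f` over `{x | g x ∈ C}` coincide with
the minimizers of `x ↦ f(x) + c · dist(g(x), C)` over `ℝⁿ`. -/
theorem stmt_5 {n m : ℕ}
    (f : EuclideanSpace ℝ (Fin n) → EReal) (hf : ∀ x, f x ≠ ⊥)
    (g : EuclideanSpace ℝ (Fin n) → EuclideanSpace ℝ (Fin m))
    (C : Set (EuclideanSpace ℝ (Fin m))) (hC : C.Nonempty) (hCcl : IsClosed C)
    (fstar : ℝ) (hfstar : (fstar : EReal) = ⨅ x ∈ {x | g x ∈ C}, f x)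
    (cstar : ℝ) (hcstar : 0 < cstar)
    (hcalm : ∀ (xbar : EuclideanSpace ℝ (Fin n)) (ubar : EuclideanSpace ℝ (Fin m)),
      g xbar ∈ C + ({ubar} : Set (EuclideanSpace ℝ (Fin m))) →
      (fstar : EReal) ≤ f xbar + ((cstar * ‖ubar‖ : ℝ) : EReal)) :
    ∀ c : ℝ, cstar < c →
      {x | g x ∈ C ∧ f x = (fstar : EReal)} =
        {x | f x + ((c * Metric.infDist (g x) C : ℝ) : EReal) =
              ⨅ x', f x' + ((c * Metric.infDist (g x') C : ℝ) : EReal)} :=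
  stmt_5_general f g C hC hCcl fstar hfstar cstar hcalm
end

section
/- Let f : ℝⁿ → ℝ ∪ {∞}, let g : ℝⁿ → ℝᵐ be a mapping, and let C be a nonempty subset of ℝᵐ; assume f_* := inf{ f(x) : g(x) ∈ C } is finite. Define the optimal value function V : ℝᵐ → ℝ ∪ {±∞} by V(u) := inf{ f(x) : g(x) ∈ C + u } (with V(u) := ∞ when no x satisfies g(x) ∈ C + u). If there exists a constant c_* > 0 such that inf{ f(x) : g(x) ∈ C } = inf_{x ∈ ℝⁿ} ( f(x) + c_*·dist(g(x), C) ), then V(0) ≤ V(u) + c_*·‖u‖ for all u ∈ ℝᵐ; in particular, liminf_{u → 0, u ≠ 0} ( V(u) − V(0) ) / ‖u‖ ≥ −c_* > −∞. -/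
open scoped Pointwise

/-!
Feasibility for the perturbed constraint `g x ∈ C + {u}` puts `g x` within distance `‖u‖` of `C`,
so every such `x` costs at least `f x + c_* dist(g x, C) - c_* ‖u‖ ≥ V(0) - c_* ‖u‖` by exactness
of the penalty. Dividing `V(u) - V(0) ≥ -c_* ‖u‖` by `‖u‖` gives the liminf bound.
-/

section OptimalValue

variable {α E : Type*} [SeminormedAddCommGroup E]

/-- The paper's `V(u)`; it is `⊤` when the perturbed problem is infeasible. -/
noncomputable def optimalValue (f : α → EReal) (g : α → E) (C : Set E) (u : E) : EReal :=
  ⨅ x ∈ {x | g x ∈ C + ({u} : Set E)}, f x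

theorem optimalValue_zero (f : α → EReal) (g : α → E) (C : Set E) :
    optimalValue f g C 0 = ⨅ x ∈ {x | g x ∈ C}, f x := by
  simp [optimalValue]

theorem Metric.infDist_le_norm_of_mem_add_singleton {C : Set E} {y u : E}
    (hy : y ∈ C + ({u} : Set E)) : Metric.infDist y C ≤ ‖u‖ := by
  rw [Set.add_singleton] at hy
  obtain ⟨z, hz, rfl⟩ := hy
  calc Metric.infDist (z + u) C ≤ dist (z + u) z := Metric.infDist_le_dist_of_mem hz
    _ = ‖u‖ := dist_self_add_left u z

theorem optimalValue_zero_le_add {f : α → EReal} {g : α → E} {C : Set E} {c : ℝ} (hc : 0 ≤ c)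
    (hexact : (⨅ x ∈ {x | g x ∈ C}, f x) = ⨅ x, f x + ((c * Metric.infDist (g x) C : ℝ) : EReal))
    (u : E) : optimalValue f g C 0 ≤ optimalValue f g C u + ((c * ‖u‖ : ℝ) : EReal) := by
  have hsub : optimalValue f g C 0 - ((c * ‖u‖ : ℝ) : EReal) ≤ optimalValue f g C u := by
    refine le_iInf₂ fun x hx => EReal.sub_le_of_le_add ?_
    have hpenalty : ((c * Metric.infDist (g x) C : ℝ) : EReal) ≤ ((c * ‖u‖ : ℝ) : EReal) :=
      EReal.coe_le_coe_iff.2 <|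
        mul_le_mul_of_nonneg_left (Metric.infDist_le_norm_of_mem_add_singleton hx) hc
    calc optimalValue f g C 0 ≤ f x + ((c * Metric.infDist (g x) C : ℝ) : EReal) := by
          rw [optimalValue_zero, hexact]; exact iInf_le _ x
      _ ≤ f x + ((c * ‖u‖ : ℝ) : EReal) := add_le_add_right hpenalty _
  exact (EReal.sub_le_iff_le_add (.inl (EReal.coe_ne_bot _)) (.inl (EReal.coe_ne_top _))).1 hsub

end OptimalValue

/-- The real base point matters: for `a = ⊤` the difference `b - a` can be `⊥`. -/
theorem EReal.neg_le_sub_div_of_le_add {a c r : ℝ} {b : EReal} (hr : 0 < r)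
    (h : (a : EReal) ≤ b + ((c * r : ℝ) : EReal)) : -(c : EReal) ≤ (b - a) / (r : EReal) := by
  rw [EReal.le_div_iff_mul_le (EReal.coe_pos.2 hr) (EReal.coe_ne_top _),
    EReal.le_sub_iff_add_le (.inl (EReal.coe_ne_bot _)) (.inl (EReal.coe_ne_top _))]
  have hsub := EReal.sub_le_of_le_add h
  calc -(c : EReal) * (r : EReal) + a = ((a - c * r : ℝ) : EReal) := by norm_cast; ring
    _ ≤ b := hsub

theorem stmt_6_general {n m : ℕ}
    (f : EuclideanSpace ℝ (Fin n) → EReal)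
    (g : EuclideanSpace ℝ (Fin n) → EuclideanSpace ℝ (Fin m))
    (C : Set (EuclideanSpace ℝ (Fin m)))
    (fstar : ℝ) (hfstar : (fstar : EReal) = ⨅ x ∈ {x | g x ∈ C}, f x)
    (V : EuclideanSpace ℝ (Fin m) → EReal)
    (hV : ∀ u, V u = ⨅ x ∈ {x | g x ∈ C + ({u} : Set (EuclideanSpace ℝ (Fin m)))}, f x)
    (cstar : ℝ) (hcstar : 0 < cstar)
    (hexact : (⨅ x ∈ {x | g x ∈ C}, f x) =
      ⨅ x, f x + ((cstar * Metric.infDist (g x) C : ℝ) : EReal)) :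
    (∀ u, V 0 ≤ V u + ((cstar * ‖u‖ : ℝ) : EReal)) ∧
      (-(cstar : EReal)) ≤ Filter.liminf
        (fun u => (V u - V 0) / ((‖u‖ : ℝ) : EReal))
        (nhdsWithin (0 : EuclideanSpace ℝ (Fin m)) {0}ᶜ) := by
  have hV' : V = optimalValue f g C := funext hV
  have hV0 : V 0 = fstar := by rw [hfstar, hV', optimalValue_zero]
  have hmain : ∀ u, V 0 ≤ V u + ((cstar * ‖u‖ : ℝ) : EReal) := by
    rw [hV']; exact optimalValue_zero_le_add hcstar.le hexact
  refine ⟨hmain, Filter.le_liminf_of_le (by isBoundedDefault) ?_⟩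
  filter_upwards [self_mem_nhdsWithin] with u hu
  rw [hV0]
  exact EReal.neg_le_sub_div_of_le_add (norm_pos_iff.2 hu) (hV0 ▸ hmain u)

/-- Corollary to Theorem 3.2, forward direction: if the distance penalty is
exact with constant `c_*`, then the optimal value function `V` satisfies
`V(0) ≤ V(u) + c_* ‖u‖` for all `u`; in particular
`liminf_{u → 0, u ≠ 0} (V(u) - V(0)) / ‖u‖ ≥ -c_* > -∞`. -/
theorem stmt_6 {n m : ℕ}
    (f : EuclideanSpace ℝ (Fin n) → EReal) (hf : ∀ x, f x ≠ ⊥)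
    (g : EuclideanSpace ℝ (Fin n) → EuclideanSpace ℝ (Fin m))
    (C : Set (EuclideanSpace ℝ (Fin m))) (hC : C.Nonempty)
    (fstar : ℝ) (hfstar : (fstar : EReal) = ⨅ x ∈ {x | g x ∈ C}, f x)
    (V : EuclideanSpace ℝ (Fin m) → EReal)
    (hV : ∀ u, V u = ⨅ x ∈ {x | g x ∈ C + ({u} : Set (EuclideanSpace ℝ (Fin m)))}, f x)
    (cstar : ℝ) (hcstar : 0 < cstar)
    (hexact : (⨅ x ∈ {x | g x ∈ C}, f x) =
      ⨅ x, f x + ((cstar * Metric.infDist (g x) C : ℝ) : EReal)) :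
    (∀ u, V 0 ≤ V u + ((cstar * ‖u‖ : ℝ) : EReal)) ∧
      (-(cstar : EReal)) ≤ Filter.liminf
        (fun u => (V u - V 0) / ((‖u‖ : ℝ) : EReal))
        (nhdsWithin (0 : EuclideanSpace ℝ (Fin m)) {0}ᶜ) :=
  stmt_6_general f g C fstar hfstar V hV cstar hcstar hexact
end

section
/- Let f : ℝⁿ → ℝ ∪ {∞}, let g : ℝⁿ → ℝᵐ be a mapping, and let C be a nonempty subset of ℝᵐ; assume f_* := inf{ f(x) : g(x) ∈ C } is finite and that f is bounded from below on ℝⁿ, i.e., there exists m ∈ ℝ with f(x) ≥ m for all x ∈ ℝⁿ. Define V : ℝᵐ → ℝ ∪ {±∞} by V(u) := inf{ f(x) : g(x) ∈ C + u } (with V(u) := ∞ when no x satisfies g(x) ∈ C + u). If liminf_{u → 0, u ≠ 0} ( V(u) − V(0) ) / ‖u‖ > −∞, then there exists a constant c_* > 0 such that inf{ f(x) : g(x) ∈ C } = inf_{x ∈ ℝⁿ} ( f(x) + c_*·dist(g(x), C) ). -/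
open scoped Pointwise Topology
open Filter Metric

/-!
The liminf hypothesis says that the value function is calm at `0`: near `0` it is bounded below
by `f_* - c‖u‖`, and far from `0` the lower bound `m` of `f` gives the same bound after enlarging
`c`. For every `x` and `y ∈ C` we have `g x ∈ C + {g x - y}`, hence
`f x ≥ V (g x - y) ≥ f_* - c‖g x - y‖`; optimizing over `y` gives
`f x + c · dist (g x, C) ≥ f_*`, while the penalty vanishes on the feasible set.
-/

theorem exists_forall_norm_lt_le_of_bot_lt_liminf {E : Type*} [NormedAddCommGroup E]
    {V : E → EReal} {a : ℝ} (hV0 : V 0 = a)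
    (h : ⊥ < liminf (fun u => (V u - V 0) / (‖u‖ : EReal)) (𝓝[≠] 0)) :
    ∃ c : ℝ, ∃ δ > 0, ∀ u : E, ‖u‖ < δ → ((a - c * ‖u‖ : ℝ) : EReal) ≤ V u := by
  obtain ⟨b, hb_bot, hb⟩ := exists_between h
  induction b using EReal.rec with
  | bot => exact absurd hb_bot (lt_irrefl _)
  | top => exact absurd hb (not_lt_of_ge le_top)
  | coe b =>
    obtain ⟨δ, hδ, hev⟩ := Metric.eventually_nhds_iff.mp
      (eventually_nhdsWithin_iff.mp (eventually_lt_of_lt_liminf hb))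
    refine ⟨-b, δ, hδ, fun u hu => ?_⟩
    rcases eq_or_ne u 0 with rfl | hu0
    · simp [hV0]
    have hquot : (b : EReal) < (V u - a) / (‖u‖ : EReal) :=
      hV0 ▸ hev (by simpa using hu) hu0
    rw [EReal.lt_div_iff (by exact_mod_cast norm_pos_iff.mpr hu0) (EReal.coe_ne_top _)] at hquot
    have hlt := EReal.add_lt_of_lt_sub hquot
    rw [← EReal.coe_mul, ← EReal.coe_add] at hlt
    calc ((a - -b * ‖u‖ : ℝ) : EReal) = ((b * ‖u‖ + a : ℝ) : EReal) := by congr 1; ring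
      _ ≤ V u := hlt.le

theorem exists_pos_forall_le_of_bot_lt_liminf {E : Type*} [NormedAddCommGroup E]
    {V : E → EReal} {a mlow : ℝ} (hV0 : V 0 = a) (hlow : ∀ u, (mlow : EReal) ≤ V u)
    (h : ⊥ < liminf (fun u => (V u - V 0) / (‖u‖ : EReal)) (𝓝[≠] 0)) :
    ∃ c > 0, ∀ u : E, ((a - c * ‖u‖ : ℝ) : EReal) ≤ V u := by
  obtain ⟨c, δ, hδ, hnear⟩ := exists_forall_norm_lt_le_of_bot_lt_liminf hV0 h
  set c' := max 1 (max c ((a - mlow) / δ))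
  have hc'_pos : 0 < c' := lt_max_of_lt_left one_pos
  refine ⟨c', hc'_pos, fun u => ?_⟩
  rcases lt_or_ge ‖u‖ δ with hu | hu
  · refine le_trans (EReal.coe_le_coe_iff.mpr ?_) (hnear u hu)
    have : c ≤ c' := le_max_of_le_right (le_max_left _ _)
    nlinarith [norm_nonneg u]
  · refine le_trans (EReal.coe_le_coe_iff.mpr ?_) (hlow u)
    have : (a - mlow) / δ ≤ c' := le_max_of_le_right (le_max_right _ _)
    have : a - mlow ≤ c' * δ := (div_le_iff₀ hδ).mp this
    nlinarith

theorem EReal.coe_le_add_mul_infDist {E : Type*} [PseudoMetricSpace E] {C : Set E}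
    (hC : C.Nonempty) {a c : ℝ} (hc : 0 < c) {e : EReal} {p : E}
    (h : ∀ y ∈ C, (a : EReal) ≤ e + (c * dist p y : ℝ)) :
    (a : EReal) ≤ e + (c * infDist p C : ℝ) := by
  induction e using EReal.rec with
  | bot =>
    obtain ⟨y, hy⟩ := hC
    simpa using h y hy
  | top => exact le_top.trans_eq (EReal.top_add_coe _).symm
  | coe r =>
    norm_cast at h ⊢
    have : (a - r) / c ≤ infDist p C :=
      (le_infDist hC).mpr fun y hy => (div_le_iff₀' hc).mpr (by linarith [h y hy])
    linarith [(div_le_iff₀' hc).mp this]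

theorem iInf_preimage_eq_iInf_add_mul_infDist {α E : Type*} [PseudoMetricSpace E]
    {f : α → EReal} {g : α → E} {C : Set E} (hC : C.Nonempty) {a c : ℝ} (hc : 0 < c)
    (ha : (a : EReal) = ⨅ x ∈ {x | g x ∈ C}, f x)
    (h : ∀ x, ∀ y ∈ C, (a : EReal) ≤ f x + (c * dist (g x) y : ℝ)) :
    (⨅ x ∈ {x | g x ∈ C}, f x) = ⨅ x, f x + ((c * infDist (g x) C : ℝ) : EReal) := by
  refine le_antisymm ?_ (le_iInf₂ fun x hx => (iInf_le _ x).trans_eq ?_)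
  · rw [← ha]
    exact le_iInf fun x => EReal.coe_le_add_mul_infDist hC hc (h x)
  · simp [infDist_zero_of_mem (show g x ∈ C from hx)]

theorem stmt_7_general {n m : ℕ}
    (f : EuclideanSpace ℝ (Fin n) → EReal)
    (g : EuclideanSpace ℝ (Fin n) → EuclideanSpace ℝ (Fin m))
    (C : Set (EuclideanSpace ℝ (Fin m))) (hC : C.Nonempty)
    (fstar : ℝ) (hfstar : (fstar : EReal) = ⨅ x ∈ {x | g x ∈ C}, f x)
    (mlow : ℝ) (hlow : ∀ x, (mlow : EReal) ≤ f x)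
    (V : EuclideanSpace ℝ (Fin m) → EReal)
    (hV : ∀ u, V u = ⨅ x ∈ {x | g x ∈ C + ({u} : Set (EuclideanSpace ℝ (Fin m)))}, f x)
    (hliminf : ⊥ < Filter.liminf
      (fun u => (V u - V 0) / ((‖u‖ : ℝ) : EReal))
      (nhdsWithin (0 : EuclideanSpace ℝ (Fin m)) {0}ᶜ)) :
    ∃ cstar : ℝ, 0 < cstar ∧
      (⨅ x ∈ {x | g x ∈ C}, f x) =
        ⨅ x, f x + ((cstar * Metric.infDist (g x) C : ℝ) : EReal) := by
  have hV0 : V 0 = fstar := by simp [hV 0, hfstar]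
  have hVlow (u) : (mlow : EReal) ≤ V u := (hV u).symm ▸ le_iInf₂ fun x _ => hlow x
  obtain ⟨c, hc, hcalm⟩ := exists_pos_forall_le_of_bot_lt_liminf hV0 hVlow hliminf
  refine ⟨c, hc, iInf_preimage_eq_iInf_add_mul_infDist hC hc hfstar fun x y hy => ?_⟩
  have hfeas : g x ∈ C + {g x - y} := by
    simpa using Set.add_mem_add hy (Set.mem_singleton (g x - y))
  have hVf : V (g x - y) ≤ f x := (hV _).trans_le (iInf₂_le x hfeas)
  calc (fstar : EReal)
      = ((fstar - c * ‖g x - y‖ : ℝ) : EReal) + ((c * dist (g x) y : ℝ) : EReal) := by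
        rw [dist_eq_norm, ← EReal.coe_add]; congr 1; ring
    _ ≤ f x + ((c * dist (g x) y : ℝ) : EReal) := by gcongr; exact (hcalm _).trans hVf

/-- Corollary to Theorem 3.2, converse direction: if `f` is bounded below on
`ℝⁿ` and `liminf_{u → 0, u ≠ 0} (V(u) - V(0)) / ‖u‖ > -∞`, then the distance
penalty is exact for some constant `c_* > 0`. -/
theorem stmt_7 {n m : ℕ}
    (f : EuclideanSpace ℝ (Fin n) → EReal) (hf : ∀ x, f x ≠ ⊥)
    (g : EuclideanSpace ℝ (Fin n) → EuclideanSpace ℝ (Fin m))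
    (C : Set (EuclideanSpace ℝ (Fin m))) (hC : C.Nonempty)
    (fstar : ℝ) (hfstar : (fstar : EReal) = ⨅ x ∈ {x | g x ∈ C}, f x)
    (mlow : ℝ) (hlow : ∀ x, (mlow : EReal) ≤ f x)
    (V : EuclideanSpace ℝ (Fin m) → EReal)
    (hV : ∀ u, V u = ⨅ x ∈ {x | g x ∈ C + ({u} : Set (EuclideanSpace ℝ (Fin m)))}, f x)
    (hliminf : ⊥ < Filter.liminf
      (fun u => (V u - V 0) / ((‖u‖ : ℝ) : EReal))
      (nhdsWithin (0 : EuclideanSpace ℝ (Fin m)) {0}ᶜ)) :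
    ∃ cstar : ℝ, 0 < cstar ∧
      (⨅ x ∈ {x | g x ∈ C}, f x) =
        ⨅ x, f x + ((cstar * Metric.infDist (g x) C : ℝ) : EReal) :=
  stmt_7_general f g C hC fstar hfstar mlow hlow V hV hliminf
end

section
/- Let S be a nonempty subset of ℝⁿ, let f : ℝⁿ → ℝ ∪ {∞} with f_* := inf_{x ∈ S} f(x) finite, and let ψ : ℝⁿ → ℝ be a residual function of S. Set A := (−∞, f_*] × {0} ⊆ ℝ² and B := closure of { (f(x), ψ(x)) : x ∈ ℝⁿ, f(x) < ∞ } ⊆ ℝ². Assume A ∩ B = { (f_*, 0) } and that there exist constants c_* > 0 and α ∈ (0, 1] such that c_*·( dist(y, A) + dist(y, B) )^α ≥ dist(y, A ∩ B) / (1 + ‖y‖²) for all y ∈ ℝ². Then c_*·(1 + f(x)²)·ψ(x)^α ≥ f_* − f(x) for every x ∈ ℝⁿ with f(x) < f_* (in particular f(x) finite). -/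
/-!
Since `(f x, ψ x) ∈ B` and `(f x, 0) ∈ A`, the point `y = (f x, 0)` has distance `0` to `A`, at most
`ψ x` to `B`, and `f_* - f x` to `A ∩ B = {(f_*, 0)}`; the Łojasiewicz inequality at `y` is the claim.
-/

open Metric

section Lojasiewicz

variable {E : Type*} [SeminormedAddCommGroup E] {A B : Set E} {c α : ℝ}

theorem infDist_inter_le_of_mem_of_mem (hc : 0 ≤ c) (hα : 0 ≤ α)
    (hLoj : ∀ y, infDist y (A ∩ B) / (1 + ‖y‖ ^ 2) ≤ c * (infDist y A + infDist y B) ^ α)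
    {y z : E} (hy : y ∈ A) (hz : z ∈ B) :
    infDist y (A ∩ B) ≤ c * (1 + ‖y‖ ^ 2) * dist y z ^ α := by
  have hdist : infDist y A + infDist y B ≤ dist y z := by
    rw [infDist_zero_of_mem hy, zero_add]
    exact infDist_le_dist_of_mem hz
  have hpos : 0 < 1 + ‖y‖ ^ 2 := by positivity
  calc infDist y (A ∩ B) ≤ c * (infDist y A + infDist y B) ^ α * (1 + ‖y‖ ^ 2) :=
        (div_le_iff₀ hpos).1 (hLoj y)
    _ ≤ c * dist y z ^ α * (1 + ‖y‖ ^ 2) := by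
        gcongr
        exact add_nonneg infDist_nonneg infDist_nonneg
    _ = c * (1 + ‖y‖ ^ 2) * dist y z ^ α := by ring

end Lojasiewicz

namespace EuclideanSpace

theorem setOf_coord_eq_eq_singleton (p q : ℝ) :
    {v : EuclideanSpace ℝ (Fin 2) | v 0 = p ∧ v 1 = q} = {!₂[p, q]} := by
  ext v
  constructor
  · rintro ⟨h0, h1⟩
    ext i
    fin_cases i <;> simp [h0, h1]
  · rintro rfl
    simp

theorem dist_vec2_same_snd (a b c : ℝ) : dist !₂[a, c] !₂[b, c] = |a - b| := by
  simp [EuclideanSpace.dist_eq, Fin.sum_univ_two, Real.dist_eq, Real.sqrt_sq_eq_abs]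

theorem dist_vec2_same_fst (a b c : ℝ) : dist !₂[a, b] !₂[a, c] = |b - c| := by
  simp [EuclideanSpace.dist_eq, Fin.sum_univ_two, Real.dist_eq, Real.sqrt_sq_eq_abs]

theorem norm_vec2_zero (a : ℝ) : ‖!₂[a, (0 : ℝ)]‖ = |a| := by
  simp [EuclideanSpace.norm_eq, Fin.sum_univ_two, Real.sqrt_sq_eq_abs]

end EuclideanSpace

theorem stmt_10_general {n : ℕ}
    (f : EuclideanSpace ℝ (Fin n) → EReal)
    (fstar : ℝ)
    (ψ : EuclideanSpace ℝ (Fin n) → ℝ)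
    (hψ0 : ∀ x, 0 ≤ ψ x)
    (A B : Set (EuclideanSpace ℝ (Fin 2)))
    (hA : A = {y | y 0 ≤ fstar ∧ y 1 = 0})
    (hB : B = closure {y | ∃ x, f x ≠ ⊤ ∧ y 0 = (f x).toReal ∧ y 1 = ψ x})
    (hAB : A ∩ B = {y | y 0 = fstar ∧ y 1 = 0})
    (cstar α : ℝ) (hcstar : 0 < cstar) (hα : 0 < α)
    (hLoj : ∀ y : EuclideanSpace ℝ (Fin 2),
      Metric.infDist y (A ∩ B) / (1 + ‖y‖ ^ 2) ≤
        cstar * (Metric.infDist y A + Metric.infDist y B) ^ α) :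
    ∀ x, f x < (fstar : EReal) →
      fstar - (f x).toReal ≤ cstar * (1 + (f x).toReal ^ 2) * ψ x ^ α := by
  intro x hx
  set a := (f x).toReal
  -- `f_* ≤ a` can occur, for `f x = ⊥` (as `⊥.toReal = 0`); the claim is then trivial.
  rcases le_or_gt fstar a with hle | hlt
  · have : 0 ≤ cstar * (1 + a ^ 2) * ψ x ^ α := by
      have := Real.rpow_nonneg (hψ0 x) α
      positivity
    linarith
  have hyA : !₂[a, 0] ∈ A := by
    rw [hA]
    simp [hlt.le]
  have hzB : !₂[a, ψ x] ∈ B := by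
    rw [hB]
    exact subset_closure ⟨x, hx.ne_top, by simp [a], by simp⟩
  have key := infDist_inter_le_of_mem_of_mem hcstar.le hα.le hLoj hyA hzB
  rwa [hAB, EuclideanSpace.setOf_coord_eq_eq_singleton, infDist_singleton,
    EuclideanSpace.dist_vec2_same_snd, abs_of_neg (sub_neg.2 hlt), neg_sub,
    EuclideanSpace.dist_vec2_same_fst, zero_sub, abs_neg, abs_of_nonneg (hψ0 x),
    EuclideanSpace.norm_vec2_zero, sq_abs] at key

/-- Pointwise inequality from the proof of Theorem 5.8: under the planar
Łojasiewicz inequality for `A := (-∞, f_*] × {0}` and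
`B := cl {(f(x), ψ(x)) : f(x) < ∞}` with `A ∩ B = {(f_*, 0)}`, one has
`c_* (1 + f(x)²) ψ(x)^α ≥ f_* - f(x)` whenever `f(x) < f_*`. -/
theorem stmt_10 {n : ℕ} (S : Set (EuclideanSpace ℝ (Fin n))) (hS : S.Nonempty)
    (f : EuclideanSpace ℝ (Fin n) → EReal) (hf : ∀ x, f x ≠ ⊥)
    (fstar : ℝ) (hfstar : (fstar : EReal) = ⨅ x ∈ S, f x)
    (ψ : EuclideanSpace ℝ (Fin n) → ℝ)
    (hψ0 : ∀ x, 0 ≤ ψ x) (hψS : ∀ x, ψ x = 0 ↔ x ∈ S)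
    (A B : Set (EuclideanSpace ℝ (Fin 2)))
    (hA : A = {y | y 0 ≤ fstar ∧ y 1 = 0})
    (hB : B = closure {y | ∃ x, f x ≠ ⊤ ∧ y 0 = (f x).toReal ∧ y 1 = ψ x})
    (hAB : A ∩ B = {y | y 0 = fstar ∧ y 1 = 0})
    (cstar α : ℝ) (hcstar : 0 < cstar) (hα : 0 < α) (hα1 : α ≤ 1)
    (hLoj : ∀ y : EuclideanSpace ℝ (Fin 2),
      Metric.infDist y (A ∩ B) / (1 + ‖y‖ ^ 2) ≤
        cstar * (Metric.infDist y A + Metric.infDist y B) ^ α) :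
    ∀ x, f x < (fstar : EReal) →
      fstar - (f x).toReal ≤ cstar * (1 + (f x).toReal ^ 2) * ψ x ^ α :=
  stmt_10_general f fstar ψ hψ0 A B hA hB hAB cstar α hcstar hα hLoj
end

section
/- Let S be a nonempty subset of ℝⁿ, let f : ℝⁿ → ℝ ∪ {∞} with f_* := inf_{x ∈ S} f(x) finite, and let ψ : ℝⁿ → ℝ be a residual function of S. Then the following two properties are equivalent: (i) there exist constants c_* > 0 and α ∈ (0, 1] such that for all c > c_*, inf_{x ∈ S} f(x) = inf_{x ∈ ℝⁿ} ( f(x) + c·ψ(x)^α ); (ii) there exist constants c_* > 0 and α ∈ (0, 1] such that c_*·ψ(x)^α ≥ [f_* − f(x)]_+ for all x ∈ ℝⁿ. Moreover, when (ii) holds with constants c_* and α, then for every c > c_* one has { x ∈ S : f(x) = f_* } = { x ∈ ℝⁿ : f(x) + c·ψ(x)^α = inf_{x' ∈ ℝⁿ} ( f(x') + c·ψ(x')^α ) }. -/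
private lemma penalty_iff (fstar r : ℝ) (hr : 0 ≤ r) (fx : EReal) (hbot : fx ≠ ⊥) :
    (max ((fstar : EReal) - fx) 0 ≤ (r : EReal)) ↔ (fstar : EReal) ≤ fx + (r : EReal) := by
  induction fx using EReal.rec with
  | bot => exact absurd rfl hbot
  | coe b =>
      rw [max_le_iff, ← EReal.coe_sub, ← EReal.coe_add]
      constructor
      · rintro ⟨h1, _⟩; exact_mod_cast by linarith [(EReal.coe_le_coe_iff.mp h1)]
      · intro h
        have : fstar ≤ b + r := EReal.coe_le_coe_iff.mp h
        exact ⟨EReal.coe_le_coe_iff.mpr (by linarith), by exact_mod_cast hr⟩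
  | top =>
      simp [EReal.add_bot]
      exact hr

/-- Theorem 5.10, equivalence (i) ⇔ (ii) together with the argmin conclusion:
exactness of the penalty `c ψ^α` for all large `c` is equivalent to the
Łojasiewicz-type bound `c_* ψ(x)^α ≥ [f_* - f(x)]₊`; moreover, under the
bound, the minimizers of `f` over `S` coincide with those of `f + c ψ^α`
over `ℝⁿ` for every `c > c_*`. -/
theorem stmt_13 {n : ℕ} (S : Set (EuclideanSpace ℝ (Fin n))) (hS : S.Nonempty)
    (f : EuclideanSpace ℝ (Fin n) → EReal) (hf : ∀ x, f x ≠ ⊥)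
    (fstar : ℝ) (hfstar : (fstar : EReal) = ⨅ x ∈ S, f x)
    (ψ : EuclideanSpace ℝ (Fin n) → ℝ)
    (hψ0 : ∀ x, 0 ≤ ψ x) (hψS : ∀ x, ψ x = 0 ↔ x ∈ S) :
    ((∃ cstar α : ℝ, 0 < cstar ∧ 0 < α ∧ α ≤ 1 ∧
        ∀ c : ℝ, cstar < c →
          (⨅ x ∈ S, f x) = ⨅ x, f x + ((c * ψ x ^ α : ℝ) : EReal)) ↔
      (∃ cstar α : ℝ, 0 < cstar ∧ 0 < α ∧ α ≤ 1 ∧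
        ∀ x, max ((fstar : EReal) - f x) 0 ≤ ((cstar * ψ x ^ α : ℝ) : EReal)))
    ∧
    (∀ cstar α : ℝ, 0 < cstar → 0 < α → α ≤ 1 →
      (∀ x, max ((fstar : EReal) - f x) 0 ≤ ((cstar * ψ x ^ α : ℝ) : EReal)) →
      ∀ c : ℝ, cstar < c →
        {x | x ∈ S ∧ f x = (fstar : EReal)} =
          {x | f x + ((c * ψ x ^ α : ℝ) : EReal) =
                ⨅ x', f x' + ((c * ψ x' ^ α : ℝ) : EReal)}) := by
  have key : ∀ cstar α : ℝ, 0 < cstar → 0 < α →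
      (∀ x, max ((fstar : EReal) - f x) 0 ≤ ((cstar * ψ x ^ α : ℝ) : EReal)) →
      ∀ c : ℝ, cstar ≤ c →
        (⨅ x ∈ S, f x) = ⨅ x, f x + ((c * ψ x ^ α : ℝ) : EReal) := by
    intro cstar α hc hα hb c hcc
    have hrpow : ∀ x, (0:ℝ) ≤ ψ x ^ α := fun x => Real.rpow_nonneg (hψ0 x) α
    apply le_antisymm
    · rw [← hfstar]
      apply le_iInf; intro x
      have hr : (0:ℝ) ≤ c * ψ x ^ α := mul_nonneg (hc.le.trans hcc) (hrpow x)
      rw [← penalty_iff fstar _ hr (f x) (hf x)]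
      refine le_trans (hb x) ?_
      exact_mod_cast mul_le_mul_of_nonneg_right hcc (hrpow x)
    · apply le_iInf₂; intro x hx
      refine (iInf_le _ x).trans ?_
      have hz : ψ x = 0 := (hψS x).mpr hx
      simp [hz, Real.zero_rpow (ne_of_gt hα)]
  constructor
  · constructor
    · rintro ⟨cstar, α, hc, hα, hα1, h⟩
      refine ⟨cstar + 1, α, by linarith, hα, hα1, fun x => ?_⟩
      have heq := h (cstar + 1) (by linarith)
      have hr : (0:ℝ) ≤ (cstar + 1) * ψ x ^ α :=
        mul_nonneg (by linarith) (Real.rpow_nonneg (hψ0 x) α)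
      rw [penalty_iff fstar _ hr (f x) (hf x)]
      calc (fstar : EReal) = ⨅ x ∈ S, f x := hfstar
        _ = ⨅ x, f x + (((cstar + 1) * ψ x ^ α : ℝ) : EReal) := heq
        _ ≤ f x + (((cstar + 1) * ψ x ^ α : ℝ) : EReal) := iInf_le _ x
    · rintro ⟨cstar, α, hc, hα, hα1, h⟩
      exact ⟨cstar, α, hc, hα, hα1, fun c hcc => key cstar α hc hα h c hcc.le⟩
  · intro cstar α hc hα hα1 hb c hcc
    have hinf : (⨅ x', f x' + ((c * ψ x' ^ α : ℝ) : EReal)) = (fstar : EReal) := by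
      rw [← key cstar α hc hα hb c hcc.le, ← hfstar]
    ext x
    simp only [Set.mem_setOf_eq]
    rw [hinf]
    constructor
    · rintro ⟨hxS, hfx⟩
      have hz : ψ x = 0 := (hψS x).mpr hxS
      simp [hz, Real.zero_rpow (ne_of_gt hα), hfx]
    · intro hx
      have htop : f x ≠ ⊤ := by
        intro h
        rw [h, EReal.top_add_of_ne_bot (EReal.coe_ne_bot _)] at hx
        exact (EReal.coe_ne_top fstar) hx.symm
      obtain ⟨a, ha⟩ : ∃ a : ℝ, f x = (a : EReal) :=
        ⟨(f x).toReal, (EReal.coe_toReal htop (hf x)).symm⟩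
      rw [ha, ← EReal.coe_add] at hx
      have heq : a + c * ψ x ^ α = fstar := EReal.coe_eq_coe_iff.mp hx
      have hbnd : fstar - a ≤ cstar * ψ x ^ α := by
        have := (le_max_left ((fstar : EReal) - f x) 0).trans (hb x)
        rw [ha, ← EReal.coe_sub] at this
        exact_mod_cast this
      have hψα : (0:ℝ) ≤ ψ x ^ α := Real.rpow_nonneg (hψ0 x) α
      have hz : ψ x ^ α = 0 := by nlinarith
      have hxS : x ∈ S := (hψS x).mp ((Real.rpow_eq_zero (hψ0 x) (ne_of_gt hα)).mp hz)
      refine ⟨hxS, ?_⟩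
      rw [ha, EReal.coe_eq_coe_iff]
      rw [hz] at heq
      linarith
end

section
/- Let S be a nonempty subset of ℝⁿ, let f : ℝⁿ → ℝ ∪ {∞} with f_* := inf_{x ∈ S} f(x) finite, and let ψ : ℝⁿ → ℝ be a residual function of S. Then the following two properties are equivalent: (i) there exist constants c_* > 0, α and β with 0 < α ≤ 1 ≤ β such that for all c > c_*, inf_{x ∈ S} f(x) = inf_{x ∈ ℝⁿ} ( f(x) + c·( ψ(x)^α + ψ(x)^β ) ); (ii) there exist constants c_* > 0, α and β with 0 < α ≤ 1 ≤ β such that c_*·( ψ(x)^α + ψ(x)^β ) ≥ [f_* − f(x)]_+ for all x ∈ ℝⁿ. Moreover, when (ii) holds with constants c_*, α, β, then for every c > c_* one has { x ∈ S : f(x) = f_* } = { x ∈ ℝⁿ : f(x) + c·( ψ(x)^α + ψ(x)^β ) = inf_{x' ∈ ℝⁿ} ( f(x') + c·( ψ(x')^α + ψ(x')^β ) ) }. -/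
/-!
Write `r = ψ^α + ψ^β`, a residual function of `S`. For real `p ≥ 0` the bound
`[f_* - f(x)]₊ ≤ p` says exactly `f_* ≤ f(x) + p`, and since the penalty vanishes on `S` the
penalized infimum never exceeds `f_*`. Hence exactness of the penalty at `c` is the bound with
constant `c`; the bound is monotone in `c`, so (ii) gives (i), and (i) gives (ii) with constant
`c_* + 1`. At a penalized minimizer `x` for `c > c_*`, comparing `f(x) + c r(x) = f_*` with
`f_* ≤ f(x) + c_* r(x)` forces `r(x) = 0`, i.e. `x ∈ S` and `f(x) = f_*`.
-/

open Real

lemma EReal.max_coe_sub_le_coe_iff (a : ℝ) (y : EReal) {p : ℝ} (hp : 0 ≤ p) :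
    max ((a : EReal) - y) 0 ≤ p ↔ (a : EReal) ≤ y + p := by
  rw [max_le_iff, EReal.sub_le_iff_le_add (.inr (EReal.coe_ne_top p)) (.inr (EReal.coe_ne_bot p)),
    add_comm]
  exact and_iff_left (EReal.coe_nonneg.2 hp)

lemma Real.rpow_add_rpow_nonneg {t : ℝ} (ht : 0 ≤ t) (α β : ℝ) : 0 ≤ t ^ α + t ^ β :=
  add_nonneg (rpow_nonneg ht α) (rpow_nonneg ht β)

lemma Real.rpow_add_rpow_eq_zero_iff {t α β : ℝ} (ht : 0 ≤ t) (hα : α ≠ 0) (hβ : β ≠ 0) :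
    t ^ α + t ^ β = 0 ↔ t = 0 := by
  rw [add_eq_zero_iff_of_nonneg (rpow_nonneg ht α) (rpow_nonneg ht β), rpow_eq_zero ht hα,
    rpow_eq_zero ht hβ, and_self]

namespace ExactPenalty

variable {X : Type*} {S : Set X} {f : X → EReal} {r : X → ℝ} {fstar : ℝ}

lemma iInf_add_penalty_le (hrS : ∀ x ∈ S, r x = 0) (c : ℝ) :
    ⨅ x, f x + ((c * r x : ℝ) : EReal) ≤ ⨅ x ∈ S, f x :=
  le_iInf₂ fun x hx => iInf_le_of_le x (by simp [hrS x hx])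

lemma iInf_eq_iInf_add_penalty_iff (hrS : ∀ x ∈ S, r x = 0)
    (hfstar : (fstar : EReal) = ⨅ x ∈ S, f x) (c : ℝ) :
    (⨅ x ∈ S, f x) = ⨅ x, f x + ((c * r x : ℝ) : EReal) ↔
      ∀ x, (fstar : EReal) ≤ f x + ((c * r x : ℝ) : EReal) := by
  rw [← hfstar]
  refine ⟨fun h x => h ▸ iInf_le _ x, fun h => le_antisymm (le_iInf h) ?_⟩
  exact hfstar ▸ iInf_add_penalty_le hrS c

lemma le_add_mul_of_le_add_mul {a : ℝ} {y : EReal} {p : ℝ} (hp : 0 ≤ p) {c c' : ℝ} (hc : c ≤ c')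
    (h : (a : EReal) ≤ y + ((c * p : ℝ) : EReal)) : (a : EReal) ≤ y + ((c' * p : ℝ) : EReal) :=
  h.trans (add_le_add_right (EReal.coe_le_coe_iff.2 (mul_le_mul_of_nonneg_right hc hp)) _)

lemma eq_zero_of_add_mul_eq {a : ℝ} {y : EReal} {p : ℝ} (hp : 0 ≤ p) {cstar c : ℝ}
    (hc : cstar < c) (hb : (a : EReal) ≤ y + ((cstar * p : ℝ) : EReal))
    (h : y + ((c * p : ℝ) : EReal) = a) : p = 0 ∧ y = a := by
  induction y using EReal.rec with
  | bot => simp at h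
  | top => rw [EReal.top_add_coe] at h; exact absurd h.symm (EReal.coe_ne_top a)
  | coe b =>
    rw [← EReal.coe_add, EReal.coe_eq_coe_iff] at h
    rw [← EReal.coe_add, EReal.coe_le_coe_iff] at hb
    have hp0 : p = 0 := by nlinarith
    exact ⟨hp0, by simp_all⟩

lemma setOf_mem_and_eq_eq_setOf_add_penalty_eq_iInf (hr0 : ∀ x, 0 ≤ r x)
    (hrS : ∀ x, r x = 0 ↔ x ∈ S) (hfstar : (fstar : EReal) = ⨅ x ∈ S, f x) {cstar c : ℝ}
    (hb : ∀ x, (fstar : EReal) ≤ f x + ((cstar * r x : ℝ) : EReal)) (hc : cstar < c) :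
    {x | x ∈ S ∧ f x = (fstar : EReal)} =
      {x | f x + ((c * r x : ℝ) : EReal) = ⨅ x', f x' + ((c * r x' : ℝ) : EReal)} := by
  have hinf : (⨅ x', f x' + ((c * r x' : ℝ) : EReal)) = fstar :=
    (hfstar.trans ((iInf_eq_iInf_add_penalty_iff (fun x => (hrS x).2) hfstar c).2
      fun x => le_add_mul_of_le_add_mul (hr0 x) hc.le (hb x))).symm
  ext x
  simp only [Set.mem_ofPred_eq, hinf]
  constructor
  · rintro ⟨hxS, hfx⟩
    simp [hfx, (hrS x).2 hxS]
  · intro h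
    obtain ⟨hrx, hfx⟩ := eq_zero_of_add_mul_eq (hr0 x) hc (hb x) h
    exact ⟨(hrS x).1 hrx, hfx⟩

end ExactPenalty

open ExactPenalty in
theorem stmt_14_general {n : ℕ} (S : Set (EuclideanSpace ℝ (Fin n)))
    (f : EuclideanSpace ℝ (Fin n) → EReal)
    (fstar : ℝ) (hfstar : (fstar : EReal) = ⨅ x ∈ S, f x)
    (ψ : EuclideanSpace ℝ (Fin n) → ℝ)
    (hψ0 : ∀ x, 0 ≤ ψ x) (hψS : ∀ x, ψ x = 0 ↔ x ∈ S) :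
    ((∃ cstar α β : ℝ, 0 < cstar ∧ 0 < α ∧ α ≤ 1 ∧ 1 ≤ β ∧
        ∀ c : ℝ, cstar < c →
          (⨅ x ∈ S, f x) = ⨅ x, f x + ((c * (ψ x ^ α + ψ x ^ β) : ℝ) : EReal)) ↔
      (∃ cstar α β : ℝ, 0 < cstar ∧ 0 < α ∧ α ≤ 1 ∧ 1 ≤ β ∧
        ∀ x, max ((fstar : EReal) - f x) 0 ≤
          ((cstar * (ψ x ^ α + ψ x ^ β) : ℝ) : EReal)))
    ∧
    (∀ cstar α β : ℝ, 0 < cstar → 0 < α → α ≤ 1 → 1 ≤ β →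
      (∀ x, max ((fstar : EReal) - f x) 0 ≤
        ((cstar * (ψ x ^ α + ψ x ^ β) : ℝ) : EReal)) →
      ∀ c : ℝ, cstar < c →
        {x | x ∈ S ∧ f x = (fstar : EReal)} =
          {x | f x + ((c * (ψ x ^ α + ψ x ^ β) : ℝ) : EReal) =
                ⨅ x', f x' + ((c * (ψ x' ^ α + ψ x' ^ β) : ℝ) : EReal)}) := by
  have hr0 (α β : ℝ) (x) : 0 ≤ ψ x ^ α + ψ x ^ β := rpow_add_rpow_nonneg (hψ0 x) α β
  have hrS {α β : ℝ} (hα : 0 < α) (hβ : 1 ≤ β) (x) : ψ x ^ α + ψ x ^ β = 0 ↔ x ∈ S :=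
    (rpow_add_rpow_eq_zero_iff (hψ0 x) hα.ne' (by positivity)).trans (hψS x)
  have hbound {cstar α β : ℝ} (hc0 : 0 < cstar) (x) :
      max ((fstar : EReal) - f x) 0 ≤ ((cstar * (ψ x ^ α + ψ x ^ β) : ℝ) : EReal) ↔
        (fstar : EReal) ≤ f x + ((cstar * (ψ x ^ α + ψ x ^ β) : ℝ) : EReal) :=
    EReal.max_coe_sub_le_coe_iff fstar (f x) (mul_nonneg hc0.le (hr0 α β x))
  refine ⟨⟨?_, ?_⟩, ?_⟩
  · rintro ⟨cstar, α, β, hc0, hα, hα1, hβ, h⟩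
    refine ⟨cstar + 1, α, β, by linarith, hα, hα1, hβ, fun x => (hbound (by linarith) x).2 ?_⟩
    exact (iInf_eq_iInf_add_penalty_iff (fun x => (hrS hα hβ x).2) hfstar _).1
      (h _ (lt_add_one cstar)) x
  · rintro ⟨cstar, α, β, hc0, hα, hα1, hβ, hb⟩
    refine ⟨cstar, α, β, hc0, hα, hα1, hβ, fun c hc => ?_⟩
    exact (iInf_eq_iInf_add_penalty_iff (fun x => (hrS hα hβ x).2) hfstar c).2
      fun x => le_add_mul_of_le_add_mul (hr0 α β x) hc.le ((hbound hc0 x).1 (hb x))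
  · intro cstar α β hc0 hα _ hβ hb c hc
    exact setOf_mem_and_eq_eq_setOf_add_penalty_eq_iInf (hr0 α β) (hrS hα hβ) hfstar
      (fun x => (hbound hc0 x).1 (hb x)) hc

/-- Theorem 5.14, equivalence (i) ⇔ (ii) together with the argmin conclusion:
exactness of the two-exponent penalty `c (ψ^α + ψ^β)` for all large `c` is
equivalent to the bound `c_* (ψ(x)^α + ψ(x)^β) ≥ [f_* - f(x)]₊`; moreover,
under the bound, the minimizers of `f` over `S` coincide with those of
`f + c (ψ^α + ψ^β)` over `ℝⁿ` for every `c > c_*`. -/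
theorem stmt_14 {n : ℕ} (S : Set (EuclideanSpace ℝ (Fin n))) (hS : S.Nonempty)
    (f : EuclideanSpace ℝ (Fin n) → EReal) (hf : ∀ x, f x ≠ ⊥)
    (fstar : ℝ) (hfstar : (fstar : EReal) = ⨅ x ∈ S, f x)
    (ψ : EuclideanSpace ℝ (Fin n) → ℝ)
    (hψ0 : ∀ x, 0 ≤ ψ x) (hψS : ∀ x, ψ x = 0 ↔ x ∈ S) :
    ((∃ cstar α β : ℝ, 0 < cstar ∧ 0 < α ∧ α ≤ 1 ∧ 1 ≤ β ∧
        ∀ c : ℝ, cstar < c →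
          (⨅ x ∈ S, f x) = ⨅ x, f x + ((c * (ψ x ^ α + ψ x ^ β) : ℝ) : EReal)) ↔
      (∃ cstar α β : ℝ, 0 < cstar ∧ 0 < α ∧ α ≤ 1 ∧ 1 ≤ β ∧
        ∀ x, max ((fstar : EReal) - f x) 0 ≤
          ((cstar * (ψ x ^ α + ψ x ^ β) : ℝ) : EReal)))
    ∧
    (∀ cstar α β : ℝ, 0 < cstar → 0 < α → α ≤ 1 → 1 ≤ β →
      (∀ x, max ((fstar : EReal) - f x) 0 ≤
        ((cstar * (ψ x ^ α + ψ x ^ β) : ℝ) : EReal)) →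
      ∀ c : ℝ, cstar < c →
        {x | x ∈ S ∧ f x = (fstar : EReal)} =
          {x | f x + ((c * (ψ x ^ α + ψ x ^ β) : ℝ) : EReal) =
                ⨅ x', f x' + ((c * (ψ x' ^ α + ψ x' ^ β) : ℝ) : EReal)}) :=
  stmt_14_general S f fstar hfstar ψ hψ0 hψS
end
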